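/- arXiv:1801.02061 — 2 statements merged into one kernel-verified Lean document; each statement's English description precedes it below -/
import Mathlib

section
/- If the demand d : [N] → [N] satisfies N_e(d) ≤ N−1, then the generalized independence number satisfies α(d) ≥ N·N_e(d). -/
open Matrix

/-- Number of distinct demands `N_e(d)`. -/
def numDistinct {K N : ℕ} (d : Fin K → Fin N) : ℕ := (Finset.univ.image d).card

/-- The set `Z^{(i,j)}(d)` for the GIC problem induced by CFL prefetching (`N = K`). -/
def Zset (F : Type*) [Field F] {N : ℕ} (d : Fin N → Fin N) (i j : Fin N) :
    Set (Matrix (Fin N) (Fin N) F) :=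
  {Z | (∑ a, Z a i) = 0 ∧ Z (d i) j ≠ 0}

/-- Generalized independence number `α(d)`: the maximum dimension of a subspace
all of whose nonzero elements lie in `⋃_{i,j} Z^{(i,j)}(d)`. -/
noncomputable def alphaCFL (F : Type*) [Field F] {N : ℕ} (d : Fin N → Fin N) : ℕ :=
  sSup { k | ∃ U : Submodule F (Matrix (Fin N) (Fin N) F),
    (∀ x ∈ U, x ≠ 0 → x ∈ ⋃ i, ⋃ j, Zset F d i j) ∧ Module.finrank F U = k }

/-- The matrix `v_i` with `v_i(a,b) = 1` iff `b = i`. -/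
def vmat (F : Type*) [Field F] {N : ℕ} (i : Fin N) : Matrix (Fin N) (Fin N) F :=
  fun _ b => if b = i then 1 else 0

/-- Min-rank `κ(d)`: the minimum over all scalar choices `c` of the dimension of the
span of the matrices `E_{d(i),j} + c(i,j)·v_i`. -/
noncomputable def kappaCFL (F : Type*) [Field F] {N : ℕ} (d : Fin N → Fin N) : ℕ :=
  sInf { k | ∃ c : Fin N × Fin N → F,
    Module.finrank F (Submodule.span F
      (Set.range fun p : Fin N × Fin N =>
        Matrix.single (d p.1) p.2 (1 : F) + c p • vmat F p.1)) = k }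

/-!
Choose a file `b` that nobody requests and let `D` be the set of requested files. The matrices
whose rows vanish outside `D ∪ {b}` and whose row `b` is minus the sum of the rows indexed by `D`
have all column sums zero, so every user's cached packet is zero on them. A nonzero such matrix
has a nonzero entry `(d i, j)`, hence lies in `Z^{(i,j)}(d)`. They form a subspace of dimension
`N · |D|`.
-/

section BalancedExtension

variable (R : Type*) {ι M : Type*} [Semiring R] [AddCommGroup M] [Module R M] [DecidableEq ι]

def balancedExtension (S : Finset ι) (b : ι) : (S → M) →ₗ[R] (ι → M) :=
  ∑ s : S, (LinearMap.single R (fun _ => M) (s : ι) - LinearMap.single R (fun _ => M) b) ∘ₗ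
    LinearMap.proj s

variable {R} {S : Finset ι} {b : ι}

theorem balancedExtension_apply (f : S → M) :
    balancedExtension R S b f = ∑ s : S, (Pi.single (s : ι) (f s) - Pi.single b (f s)) := by
  simp [balancedExtension]

theorem sum_balancedExtension_apply [Fintype ι] (f : S → M) :
    ∑ a, balancedExtension R S b f a = 0 := by
  simp only [balancedExtension_apply, Finset.sum_apply, Pi.sub_apply]
  rw [Finset.sum_comm]
  simp [Finset.sum_sub_distrib]

theorem balancedExtension_apply_of_notMem (hb : b ∉ S) (f : S → M) (s : S) :
    balancedExtension R S b f s = f s := by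
  have hsb : (s : ι) ≠ b := fun h => hb (h ▸ s.2)
  rw [balancedExtension_apply, Finset.sum_apply]
  simp only [Pi.sub_apply, Pi.single_eq_of_ne hsb, sub_zero]
  rw [Finset.sum_eq_single s
    (fun t _ hts => Pi.single_eq_of_ne (Subtype.coe_injective.ne hts.symm) _) (by simp),
    Pi.single_eq_same]

theorem balancedExtension_injective (hb : b ∉ S) :
    Function.Injective (balancedExtension R S b : (S → M) →ₗ[R] (ι → M)) := fun f g hfg =>
  funext fun s => by simpa only [balancedExtension_apply_of_notMem hb] using congrFun hfg s

end BalancedExtension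

theorem finrank_le_alphaCFL {F : Type*} [Field F] {N : ℕ} {d : Fin N → Fin N}
    (U : Submodule F (Matrix (Fin N) (Fin N) F))
    (hU : ∀ x ∈ U, x ≠ 0 → x ∈ ⋃ i, ⋃ j, Zset F d i j) :
    Module.finrank F U ≤ alphaCFL F d :=
  le_csSup ⟨_, by rintro k ⟨V, -, rfl⟩; exact Submodule.finrank_le V⟩ ⟨U, hU, rfl⟩

theorem mul_numDistinct_le_alphaCFL_of_notMem_range (F : Type*) [Field F] {N : ℕ}
    {d : Fin N → Fin N} {b : Fin N} (hb : b ∉ Set.range d) :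
    N * numDistinct d ≤ alphaCFL F d := by
  set S := Finset.univ.image d
  have hbS : b ∉ S := by simpa [S] using hb
  calc N * numDistinct d = Module.finrank F (LinearMap.range (balancedExtension F S b)) := by
        rw [LinearMap.finrank_range_of_inj (balancedExtension_injective (R := F) hbS)]
        simp [numDistinct, S, Module.finrank_pi_fintype, mul_comm]
    _ ≤ alphaCFL F d := finrank_le_alphaCFL _ ?_
  rintro _ ⟨f, rfl⟩ hf
  have hf0 : f ≠ 0 := by rintro rfl; exact hf (map_zero _)
  obtain ⟨s, hs⟩ := Function.ne_iff.mp hf0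
  obtain ⟨j, hsj⟩ := Function.ne_iff.mp hs
  obtain ⟨i, -, hi⟩ := Finset.mem_image.mp s.2
  refine Set.mem_iUnion₂.mpr ⟨i, j, ?_, ?_⟩
  · simpa using congrFun (sum_balancedExtension_apply (R := F) (b := b) f) i
  · have : d i = (s : Fin N) := hi
    simpa [this, balancedExtension_apply_of_notMem hbS] using hsj

theorem alpha_ge_of_not_all_distinct_general (F : Type*) [Field F]
    (N : ℕ) (hN : 1 ≤ N) (d : Fin N → Fin N) (hd : numDistinct d ≤ N - 1) :
    N * numDistinct d ≤ alphaCFL F d := by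
  obtain ⟨b, -, hb⟩ : ∃ b ∈ Finset.univ, b ∉ Finset.univ.image d :=
    Finset.exists_mem_notMem_of_card_lt_card (by simp [numDistinct] at hd ⊢; omega)
  exact mul_numDistinct_le_alphaCFL_of_notMem_range F (b := b) (by simpa using hb)

theorem alpha_ge_of_not_all_distinct (F : Type*) [Field F] [Fintype F]
    (N : ℕ) (hN : 1 ≤ N) (d : Fin N → Fin N) (hd : numDistinct d ≤ N - 1) :
    N * numDistinct d ≤ alphaCFL F d :=
  alpha_ge_of_not_all_distinct_general F N hN d hd
end

section
/- For every integer N ≥ 1 and every integer δ ≥ 0, the maximum over all demands d : [N] → [N] of the smallest length of a linear δ-error-correcting delivery code for I(M_CFL, d) equals N_q[N(N−1), 2δ+1], and this maximum is attained when d is a bijection. -/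
open Matrix

/-- `E` is a linear `δ`-error-correcting delivery code of length `ℓ` for the GIC
problem `I(M_CFL, d)` induced by CFL prefetching with `N` files and `K = N` users:
receiver `(i,j)` knows the coded packet `∑_a X(a,i)` and, from any received word
within Hamming distance `δ` of `E(X)`, must recover `X(d(i), j)`. -/
def IsECDeliveryCode (F : Type*) [Field F] [DecidableEq F] {N : ℕ}
    (d : Fin N → Fin N) (δ ℓ : ℕ)
    (E : Matrix (Fin N) (Fin N) F →ₗ[F] (Fin ℓ → F)) : Prop :=
  ∀ i j : Fin N, ∃ Dec : (Fin ℓ → F) → F → F,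
    ∀ X : Matrix (Fin N) (Fin N) F, ∀ y : Fin ℓ → F,
      hammingDist y (E X) ≤ δ → Dec y (∑ a, X a i) = X (d i) j

/-- The smallest length of a linear `δ`-error-correcting delivery code for
`I(M_CFL, d)`. -/
noncomputable def optLen (F : Type*) [Field F] [DecidableEq F] {N : ℕ}
    (d : Fin N → Fin N) (δ : ℕ) : ℕ :=
  sInf { ℓ | ∃ E : Matrix (Fin N) (Fin N) F →ₗ[F] (Fin ℓ → F),
    IsECDeliveryCode F d δ ℓ E }

/-- `N_q[k, d']`: the smallest length `n` of a `k`-dimensional linear code over `F`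
whose distinct codewords are at Hamming distance at least `d'` from each other. -/
noncomputable def shortestCodeLen (F : Type*) [Field F] [DecidableEq F] (k d' : ℕ) : ℕ :=
  sInf { n | ∃ C : Submodule F (Fin n → F), Module.finrank F C = k ∧
    ∀ x ∈ C, ∀ y ∈ C, x ≠ y → d' ≤ hammingDist x y }

/-!
Decoding is linear: a linear map `E` serves receiver `(i, j)` against `δ` errors iff `E` gives
Hamming weight at least `2δ + 1` to every message `Z` that the receiver's cache cannot tell
apart from `0` (`∑ₐ Z a i = 0`) but whose demanded entry `Z (d i) j` is nonzero.

If `d` is onto, every nonzero element of the `N(N-1)`-dimensional kernel of the column-sum map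
is such a message for some receiver, so `E` maps that kernel onto a linear code of minimum
distance `2δ + 1`. Conversely, for every demand there is an `N`-dimensional space `W` of
matrices supported on the entries `(σ j, j)`, where `σ` is chosen so that file `σ j` is
demanded by no user other than `j`. `W` contains no such message, so composing
`M_N → M_N ⧸ W` with an isomorphism onto an optimal code gives a delivery code of length
`N_q[N(N-1), 2δ + 1]`.
-/

open Finset

section Hamming

variable {ι : Type*} [Fintype ι]

theorem hammingDist_eq_hammingNorm_sub {β : ι → Type*} [∀ i, AddGroup (β i)]
    [∀ i, DecidableEq (β i)] (x y : ∀ i, β i) :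
    hammingDist x y = hammingNorm (x - y) := by
  simp_rw [hammingDist, hammingNorm, Pi.sub_apply, ne_eq, sub_eq_zero]

theorem exists_hammingDist_le_of_hammingDist_le_add {β : ι → Type*} [∀ i, DecidableEq (β i)]
    {x z : ∀ i, β i} {a b : ℕ} (h : hammingDist x z ≤ a + b) :
    ∃ y, hammingDist x y ≤ a ∧ hammingDist y z ≤ b := by
  classical
  set S := univ.filter fun i => x i ≠ z i
  obtain ⟨T, hTS, hT⟩ := exists_subset_card_eq (min_le_right a #S)
  refine ⟨fun i => if i ∈ T then z i else x i, ?_, ?_⟩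
  · calc hammingDist x _ ≤ #T := card_le_card fun i hi => by
          by_contra hiT
          simp [hiT] at hi
      _ ≤ a := by omega
  · calc hammingDist _ z ≤ #(S \ T) := card_le_card fun i hi => by
          by_cases hiT : i ∈ T
          · simp [hiT] at hi
          · simp_all [S]
      _ ≤ b := by
          rw [card_sdiff_of_subset hTS]
          have : hammingDist x z = #S := rfl
          omega

end Hamming

section Decoding

variable {ι β V R S : Type*} [Fintype ι] [AddCommGroup β] [DecidableEq β]
  [AddCommGroup V] [AddCommGroup R] [AddCommGroup S]

theorem exists_decoder_iff_le_hammingNorm (E : V →+ ι → β) (f : V →+ R) (g : V →+ S)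
    (δ : ℕ) :
    (∃ Dec : (ι → β) → S → R, ∀ X y, hammingDist y (E X) ≤ δ → Dec y (g X) = f X) ↔
      ∀ Z, g Z = 0 → f Z ≠ 0 → 2 * δ + 1 ≤ hammingNorm (E Z) := by
  classical
  constructor
  · rintro ⟨Dec, hDec⟩ Z hgZ hfZ
    by_contra! hZ
    obtain ⟨y, hy0, hyZ⟩ := exists_hammingDist_le_of_hammingDist_le_add (x := 0) (z := E Z)
      (a := δ) (b := δ) (by rw [hammingDist_comm, hammingDist_zero_right]; omega)
    apply hfZ
    rw [← hDec Z y hyZ, hgZ, ← g.map_zero, hDec 0 y (by rwa [map_zero, hammingDist_comm]),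
      f.map_zero]
  · intro hwt
    refine ⟨fun y s =>
      if h : ∃ X, hammingDist y (E X) ≤ δ ∧ g X = s then f h.choose else 0, ?_⟩
    intro X y hy
    have hex : ∃ X', hammingDist y (E X') ≤ δ ∧ g X' = g X := ⟨X, hy, rfl⟩
    obtain ⟨hy', hg'⟩ := hex.choose_spec
    dsimp only
    rw [dif_pos hex, ← sub_eq_zero, ← map_sub]
    by_contra hf
    have hlarge := hwt _ (by rw [map_sub, hg', sub_self]) hf
    have hsmall : hammingNorm (E (hex.choose - X)) ≤ 2 * δ := by
      rw [map_sub, ← hammingDist_eq_hammingNorm_sub]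
      calc hammingDist (E hex.choose) (E X)
          ≤ hammingDist (E hex.choose) y + hammingDist y (E X) := hammingDist_triangle _ y _
        _ ≤ 2 * δ := by rw [hammingDist_comm]; omega
    omega

end Decoding

section LinearCode

variable {F ι V : Type*} [Field F] [DecidableEq F] [Fintype ι] [AddCommGroup V] [Module F V]

theorem Submodule.le_hammingDist_iff_le_hammingNorm {R β : Type*} [Ring R] [AddCommGroup β]
    [Module R β] [DecidableEq β] (C : Submodule R (ι → β)) (w : ℕ) :
    (∀ x ∈ C, ∀ y ∈ C, x ≠ y → w ≤ hammingDist x y) ↔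
      ∀ x ∈ C, x ≠ 0 → w ≤ hammingNorm x := by
  refine ⟨fun h x hx hx0 => ?_, fun h x hx y hy hxy => ?_⟩
  · simpa using h x hx 0 C.zero_mem hx0
  · rw [hammingDist_eq_hammingNorm_sub]
    exact h _ (C.sub_mem hx hy) (sub_ne_zero.mpr hxy)

theorem finrank_map_eq_of_le_hammingNorm (E : V →ₗ[F] ι → F) {K : Submodule F V} {w : ℕ}
    (hw : 0 < w) (hE : ∀ Z ∈ K, Z ≠ 0 → w ≤ hammingNorm (E Z)) :
    Module.finrank F (K.map E) = Module.finrank F K := by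
  have hinj : Function.Injective (E.domRestrict K) := by
    refine LinearMap.ker_eq_bot.mp (LinearMap.ker_eq_bot'.mpr fun Z hZ => ?_)
    by_contra hZ0
    have := hE Z Z.2 (by simpa using hZ0)
    simp_all
  rw [← LinearMap.range_domRestrict, LinearMap.finrank_range_of_inj hinj]

theorem exists_linearMap_le_hammingNorm_of_notMem [FiniteDimensional F V] (W : Submodule F V)
    (C : Submodule F (ι → F)) (hWC : Module.finrank F (V ⧸ W) = Module.finrank F C) {w : ℕ}
    (hC : ∀ x ∈ C, x ≠ 0 → w ≤ hammingNorm x) :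
    ∃ E : V →ₗ[F] ι → F, ∀ Z ∉ W, w ≤ hammingNorm (E Z) := by
  let e := LinearEquiv.ofFinrankEq _ _ hWC
  refine ⟨C.subtype ∘ₗ e.toLinearMap ∘ₗ W.mkQ, fun Z hZ => hC _ (e _).2 ?_⟩
  simpa [Submodule.Quotient.mk_eq_zero] using hZ

theorem exists_repetitionCode (k w : ℕ) (hw : 0 < w) :
    ∃ C : Submodule F (Fin (k * w) → F), Module.finrank F C = k ∧
      ∀ x ∈ C, x ≠ 0 → w ≤ hammingNorm x := by
  let g : Fin (k * w) → Fin k := fun p => (finProdFinEquiv.symm p).1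
  have hg (a t) : g (finProdFinEquiv (a, t)) = a := by simp only [g, Equiv.symm_apply_apply]
  have hinj := LinearMap.funLeft_injective_of_surjective F F g fun a => ⟨_, hg a ⟨0, hw⟩⟩
  refine ⟨LinearMap.range (LinearMap.funLeft F F g),
    by simp [LinearMap.finrank_range_of_inj hinj], ?_⟩
  rintro _ ⟨m, rfl⟩ hm
  obtain ⟨a, ha⟩ : ∃ a, m a ≠ 0 := by
    by_contra! h
    exact hm (by rw [show m = 0 from funext h, map_zero])
  calc w = #(univ.image fun t => finProdFinEquiv (a, t)) := by
        rw [card_image_of_injective _ fun t t' h => by simpa using h, card_fin]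
    _ ≤ hammingNorm (LinearMap.funLeft F F g m) := card_le_card fun p hp => by
        obtain ⟨t, -, rfl⟩ := mem_image.mp hp
        exact mem_filter.mpr ⟨mem_univ _, by simpa [hg] using ha⟩

end LinearCode

namespace CFL

variable {F : Type*} [Field F] {N : ℕ}

/-- `colSum X i` is the packet `Y_i(X)` cached by user `i`. -/
def colSum : Matrix (Fin N) (Fin N) F →ₗ[F] Fin N → F where
  toFun X i := ∑ a, X a i
  map_add' X Y := by ext; simp [sum_add_distrib]
  map_smul' c X := by ext; simp [mul_sum]

def placeAt (σ : Fin N → Fin N) : (Fin N → F) →ₗ[F] Matrix (Fin N) (Fin N) F where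
  toFun c := Matrix.of fun a b => if a = σ b then c b else 0
  map_add' c c' := by ext; simp [ite_add_zero]
  map_smul' r c := by ext; simp

theorem colSum_placeAt (σ : Fin N → Fin N) (c : Fin N → F) : colSum (placeAt σ c) = c := by
  ext; simp [colSum, placeAt]

theorem finrank_matrix_fin : Module.finrank F (Matrix (Fin N) (Fin N) F) = N * N := by
  simp [Module.finrank_matrix]

theorem finrank_ker_colSum :
    Module.finrank F (LinearMap.ker (colSum (F := F) (N := N))) = N * (N - 1) := by
  have hsurj : Function.Surjective (colSum (F := F) (N := N)) :=
    fun c => ⟨placeAt id c, colSum_placeAt id c⟩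
  have := LinearMap.finrank_range_add_finrank_ker (colSum (F := F) (N := N))
  rw [LinearMap.range_eq_top.mpr hsurj, finrank_top, finrank_matrix_fin, Module.finrank_fin_fun] at this
  have := Nat.mul_sub_one N N
  omega

theorem finrank_quotient_range_placeAt (σ : Fin N → Fin N) :
    Module.finrank F (Matrix (Fin N) (Fin N) F ⧸ LinearMap.range (placeAt (F := F) σ)) =
      N * (N - 1) := by
  have hinj : Function.Injective (placeAt (F := F) σ) :=
    Function.LeftInverse.injective (colSum_placeAt σ)
  have := Submodule.finrank_quotient_add_finrank (LinearMap.range (placeAt (F := F) σ))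
  rw [LinearMap.finrank_range_of_inj hinj, finrank_matrix_fin, Module.finrank_fin_fun] at this
  have := Nat.mul_sub_one N N
  omega

theorem isECDeliveryCode_iff [DecidableEq F] (d : Fin N → Fin N) (δ ℓ : ℕ)
    (E : Matrix (Fin N) (Fin N) F →ₗ[F] Fin ℓ → F) :
    IsECDeliveryCode F d δ ℓ E ↔
      ∀ i j Z, colSum Z i = 0 → Z (d i) j ≠ 0 → 2 * δ + 1 ≤ hammingNorm (E Z) :=
  forall₂_congr fun i j => exists_decoder_iff_le_hammingNorm E.toAddMonoidHom
    (Matrix.entryAddMonoidHom F (d i) j) (LinearMap.proj i ∘ₗ colSum).toAddMonoidHom δ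

theorem exists_forall_eq_imp_eq (d : Fin N → Fin N) :
    ∃ σ : Fin N → Fin N, ∀ i j, σ j = d i → j = i := by
  by_cases hd : Function.Injective d
  · exact ⟨d, fun i j => @hd j i⟩
  · obtain ⟨a, ha⟩ : ∃ a, ∀ i, d i ≠ a := by
      simpa [Function.Surjective] using mt Finite.injective_iff_surjective.mpr hd
    exact ⟨fun _ => a, fun i j h => absurd h.symm (ha i)⟩

theorem notMem_range_placeAt {d σ : Fin N → Fin N} (hσ : ∀ i j, σ j = d i → j = i)
    {Z : Matrix (Fin N) (Fin N) F} {i j : Fin N} (hZi : colSum Z i = 0) (hZ : Z (d i) j ≠ 0) :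
    Z ∉ LinearMap.range (placeAt σ) := by
  rintro ⟨c, rfl⟩
  rw [colSum_placeAt] at hZi
  have hdi : d i = σ j := by
    by_contra h
    simp [placeAt, h] at hZ
  simp [placeAt, hdi, hσ i j hdi.symm, hZi] at hZ

theorem exists_isECDeliveryCode [DecidableEq F] (d : Fin N → Fin N) (δ : ℕ) {n : ℕ}
    (C : Submodule F (Fin n → F)) (hCdim : Module.finrank F C = N * (N - 1))
    (hC : ∀ x ∈ C, x ≠ 0 → 2 * δ + 1 ≤ hammingNorm x) :
    ∃ E, IsECDeliveryCode F d δ n E := by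
  obtain ⟨σ, hσ⟩ := exists_forall_eq_imp_eq d
  obtain ⟨E, hE⟩ := exists_linearMap_le_hammingNorm_of_notMem (LinearMap.range (placeAt σ)) C
    (by rw [finrank_quotient_range_placeAt, hCdim]) hC
  exact ⟨E, (isECDeliveryCode_iff d δ n E).mpr fun i j Z hZi hZ =>
    hE Z (notMem_range_placeAt hσ hZi hZ)⟩

theorem exists_code_of_isECDeliveryCode [DecidableEq F] {d : Fin N → Fin N}
    (hd : Function.Surjective d) {δ ℓ : ℕ}
    {E : Matrix (Fin N) (Fin N) F →ₗ[F] Fin ℓ → F}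
    (hE : IsECDeliveryCode F d δ ℓ E) :
    ∃ C : Submodule F (Fin ℓ → F), Module.finrank F C = N * (N - 1) ∧
      ∀ x ∈ C, x ≠ 0 → 2 * δ + 1 ≤ hammingNorm x := by
  have hwt : ∀ Z ∈ LinearMap.ker colSum, Z ≠ 0 → 2 * δ + 1 ≤ hammingNorm (E Z) := by
    intro Z hZ hZ0
    obtain ⟨a, j, haj⟩ : ∃ a j, Z a j ≠ 0 := by
      by_contra! h
      exact hZ0 (Matrix.ext h)
    obtain ⟨i, rfl⟩ := hd a
    exact (isECDeliveryCode_iff d δ ℓ E).mp hE i j Z (congrFun hZ i) haj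
  refine ⟨(LinearMap.ker colSum).map E, ?_, ?_⟩
  · rw [finrank_map_eq_of_le_hammingNorm E (by omega) hwt, finrank_ker_colSum]
  · rintro _ ⟨Z, hZ, rfl⟩ hEZ
    exact hwt Z hZ fun h => hEZ (by rw [h, map_zero])

end CFL

section OptimalLength

open CFL

variable {F : Type*} [Field F] [DecidableEq F]

theorem exists_code_of_length_shortestCodeLen (k : ℕ) {w : ℕ} (hw : 0 < w) :
    ∃ C : Submodule F (Fin (shortestCodeLen F k w) → F), Module.finrank F C = k ∧
      ∀ x ∈ C, x ≠ 0 → w ≤ hammingNorm x := by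
  simp_rw [← Submodule.le_hammingDist_iff_le_hammingNorm]
  refine Nat.sInf_mem (s := {n | ∃ C : Submodule F (Fin n → F), Module.finrank F C = k ∧
    ∀ x ∈ C, ∀ y ∈ C, x ≠ y → w ≤ hammingDist x y}) ?_
  obtain ⟨C, hCdim, hC⟩ := exists_repetitionCode (F := F) k w hw
  exact ⟨k * w, C, hCdim, (Submodule.le_hammingDist_iff_le_hammingNorm C w).mpr hC⟩

variable {N : ℕ}

theorem optLen_le_shortestCodeLen (d : Fin N → Fin N) (δ : ℕ) :
    optLen F d δ ≤ shortestCodeLen F (N * (N - 1)) (2 * δ + 1) := by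
  obtain ⟨C, hCdim, hC⟩ := exists_code_of_length_shortestCodeLen (F := F) (N * (N - 1))
    (Nat.succ_pos (2 * δ))
  exact Nat.sInf_le (exists_isECDeliveryCode d δ C hCdim hC)

theorem shortestCodeLen_le_optLen {d : Fin N → Fin N} (hd : Function.Surjective d) (δ : ℕ) :
    shortestCodeLen F (N * (N - 1)) (2 * δ + 1) ≤ optLen F d δ := by
  obtain ⟨C, hCdim, hC⟩ := exists_code_of_length_shortestCodeLen (F := F) (N * (N - 1))
    (Nat.succ_pos (2 * δ))
  obtain ⟨E, hE⟩ : ∃ E, IsECDeliveryCode F d δ (optLen F d δ) E :=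
    Nat.sInf_mem (s := {ℓ | ∃ E, IsECDeliveryCode F d δ ℓ E})
      ⟨_, exists_isECDeliveryCode d δ C hCdim hC⟩
  obtain ⟨C', hC'dim, hC'⟩ := exists_code_of_isECDeliveryCode hd hE
  exact Nat.sInf_le ⟨C', hC'dim, (Submodule.le_hammingDist_iff_le_hammingNorm C' _).mpr hC'⟩

end OptimalLength

theorem optLen_worst_CFL_NeqK_general (F : Type*) [Field F] [DecidableEq F]
    (N : ℕ) (δ : ℕ) :
    (⨆ d : Fin N → Fin N, optLen F d δ) =
      shortestCodeLen F (N * (N - 1)) (2 * δ + 1) ∧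
    ∀ d : Fin N → Fin N, Function.Bijective d →
      optLen F d δ = shortestCodeLen F (N * (N - 1)) (2 * δ + 1) := by
  have hbij : ∀ d : Fin N → Fin N, Function.Bijective d →
      optLen F d δ = shortestCodeLen F (N * (N - 1)) (2 * δ + 1) := fun d hd =>
    (optLen_le_shortestCodeLen d δ).antisymm (shortestCodeLen_le_optLen hd.2 δ)
  have : Nonempty (Fin N → Fin N) := ⟨id⟩
  refine ⟨(ciSup_le fun d => optLen_le_shortestCodeLen d δ).antisymm ?_, hbij⟩
  rw [← hbij id Function.bijective_id]
  exact le_ciSup (Set.finite_range fun d : Fin N → Fin N => optLen F d δ).bddAbove id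

theorem optLen_worst_CFL_NeqK (F : Type*) [Field F] [Fintype F] [DecidableEq F]
    (N : ℕ) (hN : 1 ≤ N) (δ : ℕ) :
    (⨆ d : Fin N → Fin N, optLen F d δ) =
      shortestCodeLen F (N * (N - 1)) (2 * δ + 1) ∧
    ∀ d : Fin N → Fin N, Function.Bijective d →
      optLen F d δ = shortestCodeLen F (N * (N - 1)) (2 * δ + 1) :=
  optLen_worst_CFL_NeqK_general F N δ
end
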